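/- Let X be a complex Banach space, n ≥ 1, f : [0,∞)^n → X locally Bochner integrable, and let G(t₁,…,tₙ) = ∫₀^{t₁}…∫₀^{tₙ} f(s₁,…,sₙ) ds₁…dsₙ. Suppose λ⁰ = (λ₁⁰,…,λₙ⁰) ∈ ℂⁿ and there is M > 0 such that for all t ∈ [0,∞)^n, ‖G(t)‖ ≤ M · Σ_{S ⊆ {1,…,n}} ∏_{j ∈ S} e^{(Re λⱼ⁰)tⱼ} ∏_{j ∉ S} ∫₀^{tⱼ} e^{(Re λⱼ⁰)s} ds. If λ = (λ₁,…,λₙ) ∈ ℂⁿ satisfies Re λⱼ > max(Re λⱼ⁰, 0) for all j, then λ ∈ Ω_abs(G), λ ∈ Ω(f) ∩ Ω_b(f), and (Lf)(λ₁,…,λₙ) = λ₁·…·λₙ · (LG)(λ₁,…,λₙ). -/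

import Mathlib

open MeasureTheory Set Filter

noncomputable section

/-- The nonnegative orthant `[0,∞)^n`. -/
def orthant (n : ℕ) : Set (Fin n → ℝ) := {t | ∀ j, 0 ≤ t j}

/-- The box `[0,t₁] × … × [0,tₙ]`. -/
def box {n : ℕ} (t : Fin n → ℝ) : Set (Fin n → ℝ) := Set.univ.pi fun j => Set.Icc 0 (t j)

variable {X : Type*} [NormedAddCommGroup X] [NormedSpace ℂ X]

/-- The Laplace kernel `t ↦ e^{-λ₁t₁-…-λₙtₙ} f(t)`. -/
def lapKer {n : ℕ} (lam : Fin n → ℂ) (f : (Fin n → ℝ) → X) : (Fin n → ℝ) → X :=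
  fun t => Complex.exp (-(∑ j, lam j * (t j : ℂ))) • f t

/-- Absolute convergence of the Laplace integral at `lam`: membership in `Ω_abs(f)`. -/
def OmegaAbs {n : ℕ} (f : (Fin n → ℝ) → X) (lam : Fin n → ℂ) : Prop :=
  IntegrableOn (lapKer lam f) (orthant n)

/-- The (absolutely convergent) Laplace transform `(Lf)(λ)`. -/
def lapTr {n : ℕ} (f : (Fin n → ℝ) → X) (lam : Fin n → ℂ) : X :=
  ∫ t in orthant n, lapKer lam f t

/-- The truncated Laplace integral `I(f,λ,t)`. -/
def truncInt {n : ℕ} (f : (Fin n → ℝ) → X) (lam : Fin n → ℂ) (t : Fin n → ℝ) : X :=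
  ∫ s in box t, lapKer lam f s

/-- Convergence of the Laplace integral at `lam` with value `F`. -/
def LapConvTo {n : ℕ} (f : (Fin n → ℝ) → X) (lam : Fin n → ℂ) (F : X) : Prop :=
  ∀ ε > 0, ∃ M > 0, ∀ t : Fin n → ℝ, (∀ j, M < t j) → ‖truncInt f lam t - F‖ < ε

/-- Convergence of the Laplace integral at `lam`: membership in `Ω(f)`. -/
def OmegaConv {n : ℕ} (f : (Fin n → ℝ) → X) (lam : Fin n → ℂ) : Prop :=
  ∃ F, LapConvTo f lam F

/-- Boundedness of all truncated Laplace integrals: membership in `Ω_b(f)`. -/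
def OmegaBdd {n : ℕ} (f : (Fin n → ℝ) → X) (lam : Fin n → ℂ) : Prop :=
  ∃ C, ∀ t : Fin n → ℝ, ‖truncInt f lam t‖ ≤ C

/-- Local Bochner integrability on `[0,∞)^n`. -/
def LocInt {n : ℕ} (f : (Fin n → ℝ) → X) : Prop :=
  ∀ t : Fin n → ℝ, IntegrableOn f (box t)

/-!
Write `G t = ∫_{[0,t]} f` and `aⱼ = Re λ⁰ⱼ`. The `2ⁿ`-term bound on `G` factors as
`M ∏ⱼ (e^{aⱼtⱼ} + ∫_0^{tⱼ} e^{aⱼs} ds)`, so `‖G t‖ ≤ C ∏ⱼ e^{bⱼtⱼ}` for any `bⱼ > max aⱼ 0`; with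
`bⱼ < Re λⱼ` the Laplace integral of `G` converges absolutely.

For `f`, write `e^{-λⱼsⱼ} = e^{-λⱼtⱼ} + ∫_{sⱼ}^{tⱼ} λⱼ e^{-λⱼuⱼ} duⱼ` in every coordinate, expand
the product over the subsets `S` of coordinates and apply Fubini: `I(f, λ, t)` becomes a sum of
`2ⁿ` terms, the term `S` integrating `G` against `∏_{j ∈ S} λⱼ e^{-λⱼuⱼ}` and carrying the factor
`∏_{j ∉ S} e^{-λⱼtⱼ}`. Each term is `O(∏_{j ∉ S} e^{-(Re λⱼ - bⱼ) tⱼ})`, so all of them are bounded,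
those with `S ≠ univ` tend to `0`, and the term `S = univ` is `λ₁⋯λₙ · I(G, λ, t)`.
-/

open scoped Topology Real Complex

section Products

variable {ι E : Type*} [Fintype ι] [MeasureSpace E] [SigmaFinite (volume : Measure E)]

theorem setIntegral_univ_pi_prod {𝕜 : Type*} [RCLike 𝕜] (A : ι → Set E) (g : ι → E → 𝕜) :
    ∫ u in univ.pi A, ∏ i, g i (u i) = ∏ i, ∫ x in A i, g i x := by
  rw [volume_pi, Measure.restrict_pi_pi, integral_fintype_prod_eq_prod]

theorem integrableOn_univ_pi_prod {𝕜 : Type*} [NormedCommRing 𝕜] {A : ι → Set E}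
    {g : ι → E → 𝕜} (hg : ∀ i, IntegrableOn (g i) (A i)) :
    IntegrableOn (fun u => ∏ i, g i (u i)) (univ.pi A) := by
  rw [IntegrableOn, volume_pi, Measure.restrict_pi_pi]
  exact .fintype_prod hg

end Products

theorem prod_piecewise_apply {ι α M : Type*} [Fintype ι] [DecidableEq ι] [CommMonoid M]
    (S : Finset ι) (g : ι → α → M) (u t : ι → α) :
    ∏ j, g j (S.piecewise u t j) = (∏ j ∈ S, g j (u j)) * ∏ j ∈ Sᶜ, g j (t j) := by
  rw [← S.prod_mul_prod_compl]
  congr 1 <;> refine Finset.prod_congr rfl fun j hj => ?_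
  · rw [S.piecewise_eq_of_mem _ _ hj]
  · rw [S.piecewise_eq_of_notMem _ _ (Finset.mem_compl.1 hj)]

theorem atTop_basis_Ici_natCast {ι : Type*} [Finite ι] :
    (atTop : Filter (ι → ℝ)).HasBasis (fun _ : ℕ => True) fun k => Ici fun _ => (k : ℝ) :=
  atTop_basis.to_hasBasis
    (fun a _ =>
      let ⟨B, hB⟩ := Finite.bddAbove_range a
      let ⟨k, hk⟩ := exists_nat_ge B
      ⟨k, trivial, Ici_subset_Ici.2 fun i => (hB ⟨i, rfl⟩).trans hk⟩)
    fun _ _ => ⟨_, trivial, subset_rfl⟩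

instance {ι : Type*} [Finite ι] : (atTop : Filter (ι → ℝ)).IsCountablyGenerated :=
  atTop_basis_Ici_natCast.isCountablyGenerated

theorem exp_neg_sub_mul (a b x : ℝ) : rexp (-((a - b) * x)) = rexp (-(a * x)) * rexp (b * x) := by
  rw [← Real.exp_add]; ring_nf

theorem norm_cexp_neg_mul_ofReal (z : ℂ) (x : ℝ) : ‖cexp (-(z * x))‖ = rexp (-(z.re * x)) := by
  simp [Complex.norm_exp]

theorem integral_Icc_ite_mul_cexp {z : ℂ} {s t : ℝ} (hs : 0 ≤ s) (hst : s ≤ t) :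
    ∫ x in Icc 0 t, (if s ≤ x then z * cexp (-(z * x)) else 0) =
      cexp (-(z * s)) - cexp (-(z * t)) := by
  have hderiv : ∀ x : ℝ, HasDerivAt (fun x : ℝ => -cexp (-(z * x))) (z * cexp (-(z * x))) x := by
    intro x
    simpa [mul_comm] using (((hasDerivAt_id (x : ℂ)).const_mul z).neg.cexp.neg).comp_ofReal
  have hind : (fun x : ℝ => if s ≤ x then z * cexp (-(z * x)) else 0) =
      (Ici s).indicator fun x => z * cexp (-(z * x)) := by
    ext x; simp [indicator_apply]
  have hset : Icc 0 t ∩ Ici s = Icc s t :=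
    ext fun x => ⟨fun h => ⟨h.2, h.1.2⟩, fun h => ⟨⟨hs.trans h.1, h.2⟩, h.1⟩⟩
  rw [hind, setIntegral_indicator measurableSet_Ici, hset,
    integral_Icc_eq_integral_Ioc, ← intervalIntegral.integral_of_le hst,
    intervalIntegral.integral_eq_sub_of_hasDerivAt (fun x _ => hderiv x)
      (by apply Continuous.intervalIntegrable; fun_prop)]
  ring

theorem integral_Icc_mul_exp_neg_le {a δ : ℝ} (ha : 0 ≤ a) (hδ : 0 < δ) (t : ℝ) :
    ∫ x in Icc 0 t, a * rexp (-(δ * x)) ≤ a / δ := by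
  have hint : IntegrableOn (fun x => a * rexp (-(δ * x))) (Ioi 0) := by
    have := (exp_neg_integrableOn_Ioi 0 hδ).const_mul a
    simp only [neg_mul] at this
    exact this
  calc ∫ x in Icc 0 t, a * rexp (-(δ * x)) ≤ ∫ x in Ioi 0, a * rexp (-(δ * x)) :=
        setIntegral_mono_set hint (ae_of_all _ fun x => by positivity)
          (Icc_subset_Ici_self.eventuallyLE.trans Ioi_ae_eq_Ici.symm.le)
    _ = a / δ := by
        rw [integral_const_mul]
        simpa [← neg_mul, div_eq_mul_inv] using
          congrArg (a * ·) (integral_exp_mul_Ioi (neg_neg_iff_pos.2 hδ) 0)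

theorem exp_add_integral_exp_le {a b t : ℝ} (hab : a ≤ b) (hb : 0 < b) (ht : 0 ≤ t) :
    rexp (a * t) + ∫ s in (0 : ℝ)..t, rexp (a * s) ≤ (1 + 1 / b) * rexp (b * t) := by
  have hint : ∫ s in (0 : ℝ)..t, rexp (b * s) = (rexp (b * t) - 1) / b := by
    rw [intervalIntegral.integral_comp_mul_left (fun x => rexp x) hb.ne', integral_exp]
    simp [div_eq_inv_mul]
  have hmono : ∫ s in (0 : ℝ)..t, rexp (a * s) ≤ ∫ s in (0 : ℝ)..t, rexp (b * s) :=
    intervalIntegral.integral_mono_on ht (by apply Continuous.intervalIntegrable; fun_prop)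
      (by apply Continuous.intervalIntegrable; fun_prop)
      fun s hs => Real.exp_le_exp.2 (mul_le_mul_of_nonneg_right hab hs.1)
  have hexp : rexp (a * t) ≤ rexp (b * t) := Real.exp_le_exp.2 (mul_le_mul_of_nonneg_right hab ht)
  have hdiv : (rexp (b * t) - 1) / b ≤ rexp (b * t) / b := by gcongr; linarith
  rw [hint] at hmono
  rw [add_mul, one_mul, one_div_mul_eq_div]
  linarith

variable {n : ℕ}

theorem cexp_neg_sum_mul (lam : Fin n → ℂ) (t : Fin n → ℝ) :
    cexp (-(∑ j, lam j * t j)) = ∏ j, cexp (-(lam j * t j)) := by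
  rw [← Finset.sum_neg_distrib, Complex.exp_sum]

section Box

theorem box_eq_Icc (t : Fin n → ℝ) : box t = Icc 0 t := pi_univ_Icc 0 t

theorem mem_box {s t : Fin n → ℝ} : s ∈ box t ↔ ∀ j, 0 ≤ s j ∧ s j ≤ t j := by
  simp only [box, mem_univ_pi, mem_Icc]

theorem orthant_eq_univ_pi : orthant n = univ.pi fun _ => Ici 0 := by
  ext; simp [orthant, Pi.le_def]

theorem measurableSet_box (t : Fin n → ℝ) : MeasurableSet (box t) :=
  .univ_pi fun _ => measurableSet_Icc

theorem measurableSet_orthant : MeasurableSet (orthant n) := by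
  rw [orthant_eq_univ_pi]; exact .univ_pi fun _ => measurableSet_Ici

theorem box_subset_orthant (t : Fin n → ℝ) : box t ⊆ orthant n :=
  fun _ hs j => (mem_box.1 hs j).1

theorem box_mono {t t' : Fin n → ℝ} (h : t ≤ t') : box t ⊆ box t' := by
  simpa only [box_eq_Icc] using Icc_subset_Icc le_rfl h

theorem eventually_mem_box_iff {s t₀ : Fin n → ℝ} (hs : ∀ j, s j ≠ t₀ j) :
    ∀ᶠ t in 𝓝 t₀, (s ∈ box t ↔ s ∈ box t₀) := by
  have hcoord : ∀ j, ∀ᶠ t in 𝓝 t₀, (s j ≤ t j ↔ s j ≤ t₀ j) := fun j => by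
    rcases (hs j).lt_or_gt with h | h
    · filter_upwards [(continuous_apply j).continuousAt.eventually (eventually_gt_nhds h)]
        with t ht using iff_of_true ht.le h.le
    · filter_upwards [(continuous_apply j).continuousAt.eventually (eventually_lt_nhds h)]
        with t ht using iff_of_false ht.not_ge h.not_ge
  filter_upwards [eventually_all.2 hcoord] with t ht
  simp only [mem_box]
  exact forall_congr' fun j => and_congr_right fun _ => ht j

theorem box_inter_setOf_le {S : Finset (Fin n)} {t u : Fin n → ℝ}
    (hu : u ∈ box (S.piecewise t 1)) :
    box t ∩ {s | ∀ j ∈ S, s j ≤ u j} = box (S.piecewise u t) := by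
  have hut : ∀ j ∈ S, u j ≤ t j := fun j hj => by
    simpa [Finset.piecewise_eq_of_mem _ _ _ hj] using (mem_box.1 hu j).2
  ext s
  simp only [mem_inter_iff, mem_box, mem_ofPred_eq, Finset.piecewise]
  constructor
  · rintro ⟨hst, hsu⟩ j
    split_ifs with hj
    exacts [⟨(hst j).1, hsu j hj⟩, hst j]
  · intro hs
    refine ⟨fun j => ⟨(hs j).1, ?_⟩, fun j hj => by simpa [hj] using (hs j).2⟩
    have := (hs j).2
    split_ifs at this with hj
    exacts [this.trans (hut j hj), this]

end Box

theorem continuous_setIntegral_box {f : (Fin n → ℝ) → X} (hf : LocInt f) :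
    Continuous fun t => ∫ s in box t, f s := by
  refine continuous_iff_continuousAt.2 fun t₀ => ?_
  have hR : ∀ᶠ t in 𝓝 t₀, t ≤ t₀ + 1 := eventually_all.2 fun j =>
    (continuous_apply j).continuousAt.eventually (eventually_le_nhds (lt_add_one (t₀ j)))
  have hloc : (fun t => ∫ s in box (t₀ + 1), (box t).indicator f s) =ᶠ[𝓝 t₀]
      fun t => ∫ s in box t, f s := by
    filter_upwards [hR] with t ht
    rw [setIntegral_indicator (measurableSet_box t), inter_eq_right.2 (box_mono ht)]
  refine (continuousAt_of_dominated
    (Eventually.of_forall fun t => (hf _).aestronglyMeasurable.indicator (measurableSet_box t))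
    (Eventually.of_forall fun t => ae_of_all _ fun s => norm_indicator_le_norm_self f s)
    (hf (t₀ + 1)).norm ?_).congr hloc
  -- off the hyperplanes `s j = t₀ j`, the integrand is locally constant in `t`
  refine ae_restrict_of_ae ?_
  filter_upwards [ae_all_iff.2 fun j => Measure.ae_eval_ne (fun _ => volume) j (t₀ j)] with s hs
  exact (continuousAt_const (y := (box t₀).indicator f s)).congr <|
    (eventually_mem_box_iff hs).mono fun t ht => by by_cases h : s ∈ box t₀ <;> simp [h, ht]

theorem norm_setIntegral_box_le_exp {f : (Fin n → ℝ) → X} {a b : Fin n → ℝ} {M : ℝ}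
    (hM : 0 ≤ M)
    (hG : ∀ t : Fin n → ℝ, (∀ j, 0 ≤ t j) →
      ‖∫ s in box t, f s‖ ≤ M * ∑ S : Finset (Fin n),
        (∏ j ∈ S, rexp (a j * t j)) * ∏ j ∈ Sᶜ, ∫ s in (0 : ℝ)..(t j), rexp (a j * s))
    (hab : ∀ j, a j ≤ b j) (hb : ∀ j, 0 < b j) {t : Fin n → ℝ} (ht : 0 ≤ t) :
    ‖∫ s in box t, f s‖ ≤ (M * ∏ j, (1 + 1 / b j)) * ∏ j, rexp (b j * t j) := by
  refine (hG t ht).trans ?_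
  rw [← Fintype.prod_add, mul_assoc, ← Finset.prod_mul_distrib]
  refine mul_le_mul_of_nonneg_left (Finset.prod_le_prod (fun j _ => ?_) fun j _ => ?_) hM
  · exact add_nonneg (Real.exp_pos _).le
      (intervalIntegral.integral_nonneg (ht j) fun _ _ => (Real.exp_pos _).le)
  · exact exp_add_integral_exp_le (hab j) (hb j) (ht j)

theorem omegaAbs_of_norm_le_exp {G : (Fin n → ℝ) → X} (hGc : Continuous G) {lam : Fin n → ℂ}
    {b : Fin n → ℝ} {C : ℝ} (hb : ∀ j, b j < (lam j).re)
    (hG : ∀ v, 0 ≤ v → ‖G v‖ ≤ C * ∏ j, rexp (b j * v j)) :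
    OmegaAbs G lam := by
  have hdom : IntegrableOn (fun v => C * ∏ j, rexp (-(((lam j).re - b j) * v j))) (orthant n) := by
    have := integrableOn_univ_pi_prod (A := fun _ : Fin n => Ici (0 : ℝ))
      (g := fun j x => rexp (-(((lam j).re - b j) * x))) fun j => by
        rw [integrableOn_Ici_iff_integrableOn_Ioi]
        simpa only [neg_mul] using exp_neg_integrableOn_Ioi 0 (sub_pos.2 (hb j))
    rw [orthant_eq_univ_pi]
    exact this.const_mul C
  refine hdom.mono' (by unfold lapKer; fun_prop) ?_
  filter_upwards [ae_restrict_mem measurableSet_orthant] with v hv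
  rw [lapKer, norm_smul, cexp_neg_sum_mul, norm_prod]
  simp only [norm_cexp_neg_mul_ofReal]
  calc (∏ j, rexp (-((lam j).re * v j))) * ‖G v‖
      ≤ (∏ j, rexp (-((lam j).re * v j))) * (C * ∏ j, rexp (b j * v j)) := by
        gcongr; exact hG v hv
    _ = C * ∏ j, rexp (-(((lam j).re - b j) * v j)) := by
        simp only [exp_neg_sub_mul, Finset.prod_mul_distrib]
        ring

theorem tendsto_truncInt_lapTr {g : (Fin n → ℝ) → X} {lam : Fin n → ℂ} (h : OmegaAbs g lam) :
    Tendsto (truncInt g lam) atTop (𝓝 (lapTr g lam)) := by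
  have hcover : AECover (volume.restrict (orthant n)) atTop (box (n := n)) := by
    refine ⟨?_, measurableSet_box⟩
    filter_upwards [ae_restrict_mem measurableSet_orthant] with v hv
    filter_upwards [eventually_ge_atTop v] with t ht
    rw [box_eq_Icc]
    exact ⟨hv, ht⟩
  have := hcover.integral_tendsto_of_countably_generated h
  simp_rw [Measure.restrict_restrict (measurableSet_box _),
    inter_eq_left.2 (box_subset_orthant _)] at this
  exact this

theorem lapConvTo_of_tendsto {f : (Fin n → ℝ) → X} {lam : Fin n → ℂ} {F : X}
    (h : Tendsto (truncInt f lam) atTop (𝓝 F)) : LapConvTo f lam F := by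
  intro ε hε
  obtain ⟨k, -, hk⟩ := (atTop_basis_Ici_natCast.tendsto_iff Metric.nhds_basis_ball).1 h ε hε
  refine ⟨k + 1, by positivity, fun t ht => ?_⟩
  simpa [dist_eq_norm] using hk t fun j => by linarith [ht j]

/-- For `0 ≤ s ≤ t`, `e^{-λ s} - e^{-λ t} = ∫_0^t 1_{s ≤ u} λ e^{-λ u} du`; this is the product
over `j ∈ S` of these integrands. -/
def ibpKernel (lam : Fin n → ℂ) (S : Finset (Fin n)) (s u : Fin n → ℝ) : ℂ :=
  ∏ j ∈ S, if s j ≤ u j then lam j * cexp (-(lam j * u j)) else 0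

theorem integral_ibpKernel (lam : Fin n → ℂ) (S : Finset (Fin n)) {s t : Fin n → ℝ}
    (hs : s ∈ box t) :
    ∫ u in box (S.piecewise t 1), ibpKernel lam S s u =
      ∏ j ∈ S, (cexp (-(lam j * s j)) - cexp (-(lam j * t j))) := by
  set g : Fin n → ℝ → ℂ := fun j x =>
    if j ∈ S then (if s j ≤ x then lam j * cexp (-(lam j * x)) else 0) else 1
  have hprod : ∀ u, ibpKernel lam S s u = ∏ j, g j (u j) := fun u => by
    simp only [g, ibpKernel, Finset.prod_ite_mem, Finset.univ_inter]
  have hg : ∀ j, ∫ x in Icc 0 (S.piecewise t 1 j), g j x =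
      if j ∈ S then cexp (-(lam j * s j)) - cexp (-(lam j * t j)) else 1 := fun j => by
    by_cases hj : j ∈ S
    · simp only [g, hj, if_true, Finset.piecewise_eq_of_mem _ _ _ hj]
      exact integral_Icc_ite_mul_cexp (mem_box.1 hs j).1 (mem_box.1 hs j).2
    · simp [g, hj]
  simp_rw [hprod, box, setIntegral_univ_pi_prod, hg, Finset.prod_ite_mem, Finset.univ_inter]

theorem integral_ibpKernel_smul (f : (Fin n → ℝ) → X) (lam : Fin n → ℂ)
    (S : Finset (Fin n)) {t u : Fin n → ℝ} (hu : u ∈ box (S.piecewise t 1)) :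
    ∫ s in box t, ibpKernel lam S s u • f s =
      (∏ j ∈ S, lam j * cexp (-(lam j * u j))) • ∫ s in box (S.piecewise u t), f s := by
  set p := ∏ j ∈ S, lam j * cexp (-(lam j * u j))
  set A := {s : Fin n → ℝ | ∀ j ∈ S, s j ≤ u j}
  have hA : MeasurableSet A := by
    simp only [A, ofPred_forall]
    exact .biInter S.countable_toSet fun j _ => measurableSet_le (measurable_pi_apply j)
      measurable_const
  have hind : ∀ s, ibpKernel lam S s u • f s = A.indicator (fun s => p • f s) s := fun s => by
    rw [ibpKernel, Finset.prod_ite_zero]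
    split_ifs with h
    · exact (indicator_of_mem (s := A) h (fun s => p • f s)).symm
    · rw [zero_smul, indicator_of_notMem (s := A) h]
  simp_rw [hind]
  rw [setIntegral_indicator hA, box_inter_setOf_le hu, integral_smul]

theorem integral_prod_sub_smul_eq [CompleteSpace X] {f : (Fin n → ℝ) → X} (hf : LocInt f)
    (lam : Fin n → ℂ) (S : Finset (Fin n)) (t : Fin n → ℝ) :
    ∫ s in box t, (∏ j ∈ S, (cexp (-(lam j * s j)) - cexp (-(lam j * t j)))) • f s =
      ∫ u in box (S.piecewise t 1),
        (∏ j ∈ S, lam j * cexp (-(lam j * u j))) • ∫ s in box (S.piecewise u t), f s := by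
  set c := S.piecewise t 1
  set p : (Fin n → ℝ) → ℂ := fun u => ∏ j ∈ S, lam j * cexp (-(lam j * u j))
  have hk : ∀ s u, ‖ibpKernel lam S s u‖ ≤ ‖p u‖ := fun s u => by
    rw [ibpKernel, Finset.prod_ite_zero]
    split_ifs
    exacts [le_rfl, norm_zero.trans_le (norm_nonneg _)]
  have hint : Integrable (Function.uncurry fun s u => ibpKernel lam S s u • f s)
      ((volume.restrict (box t)).prod (volume.restrict (box c))) := by
    have hp : IntegrableOn p (box c) :=
      (by fun_prop : Continuous p).continuousOn.integrableOn_compact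
        (box_eq_Icc c ▸ isCompact_Icc)
    refine ((hf t).norm.mul_prod hp.norm).mono' ?_ (ae_of_all _ fun ⟨s, u⟩ => ?_)
    · refine .smul ?_ (hf t).aestronglyMeasurable.comp_fst
      refine (Finset.measurable_prod _ fun j _ => ?_).aestronglyMeasurable
      exact Measurable.ite (measurableSet_le (by fun_prop) (by fun_prop)) (by fun_prop)
        measurable_const
    · rw [Function.uncurry_apply_pair, norm_smul, mul_comm]
      exact mul_le_mul_of_nonneg_left (hk s u) (norm_nonneg _)
  calc ∫ s in box t, (∏ j ∈ S, (cexp (-(lam j * s j)) - cexp (-(lam j * t j)))) • f s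
      = ∫ s in box t, ∫ u in box c, ibpKernel lam S s u • f s :=
        setIntegral_congr_fun (measurableSet_box t) fun s hs => by
          rw [integral_smul_const, integral_ibpKernel lam S hs]
    _ = ∫ u in box c, ∫ s in box t, ibpKernel lam S s u • f s := integral_integral_swap hint
    _ = ∫ u in box c, p u • ∫ s in box (S.piecewise u t), f s :=
        setIntegral_congr_fun (measurableSet_box c) fun u hu => integral_ibpKernel_smul f lam S hu

/-- The term indexed by `S` in the expansion of `I(f, λ, t)` obtained by integrating by parts in
the coordinates `j ∈ S`, written with the antiderivative `G` of `f`. The coordinates `j ∉ S` of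
`G` are frozen at `t j`; the integration over them on `[0, 1]` is a dummy. -/
def ibpTerm (lam : Fin n → ℂ) (G : (Fin n → ℝ) → X) (S : Finset (Fin n)) (t : Fin n → ℝ) : X :=
  (∏ j ∈ Sᶜ, cexp (-(lam j * t j))) •
    ∫ u in box (S.piecewise t 1), (∏ j ∈ S, lam j * cexp (-(lam j * u j))) • G (S.piecewise u t)

theorem truncInt_eq_sum_ibpTerm [CompleteSpace X] {f : (Fin n → ℝ) → X} (hf : LocInt f)
    (lam : Fin n → ℂ) (t : Fin n → ℝ) :
    truncInt f lam t = ∑ S, ibpTerm lam (fun v => ∫ s in box v, f s) S t := by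
  have hexp : ∀ s : Fin n → ℝ, cexp (-(∑ j, lam j * s j)) = ∑ S : Finset (Fin n),
      (∏ j ∈ Sᶜ, cexp (-(lam j * t j))) *
        ∏ j ∈ S, (cexp (-(lam j * s j)) - cexp (-(lam j * t j))) := fun s => by
    simp_rw [cexp_neg_sum_mul, mul_comm (∏ j ∈ _ᶜ, _)]
    rw [← Fintype.prod_add]
    simp
  have hint : ∀ S : Finset (Fin n), IntegrableOn (fun s => (∏ j ∈ Sᶜ, cexp (-(lam j * t j))) •
      (∏ j ∈ S, (cexp (-(lam j * s j)) - cexp (-(lam j * t j)))) • f s) (box t) := fun S =>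
    ((hf t).continuousOn_smul (by fun_prop) (box_eq_Icc t ▸ isCompact_Icc)).smul _
  simp_rw [truncInt, lapKer, hexp, Finset.sum_smul, mul_smul]
  rw [integral_finsetSum _ fun S _ => hint S]
  simp_rw [integral_smul, integral_prod_sub_smul_eq hf]
  rfl

theorem ibpTerm_univ (lam : Fin n → ℂ) (G : (Fin n → ℝ) → X) (t : Fin n → ℝ) :
    ibpTerm lam G Finset.univ t = (∏ j, lam j) • truncInt G lam t := by
  simp_rw [ibpTerm, truncInt, lapKer, Finset.compl_univ, Finset.prod_empty, one_smul,
    Finset.piecewise_univ, Finset.prod_mul_distrib, cexp_neg_sum_mul, mul_smul, integral_smul]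

theorem integral_box_piecewise_prod_exp_le {S : Finset (Fin n)} {a δ : Fin n → ℝ}
    (ha : ∀ j, 0 ≤ a j) (hδ : ∀ j, 0 < δ j) (t : Fin n → ℝ) :
    ∫ u in box (S.piecewise t 1), ∏ j ∈ S, a j * rexp (-(δ j * u j)) ≤
      ∏ j, max 1 (a j / δ j) := by
  set φ : Fin n → ℝ → ℝ := fun j x => if j ∈ S then a j * rexp (-(δ j * x)) else 1
  have hφ : ∀ u : Fin n → ℝ, ∏ j ∈ S, a j * rexp (-(δ j * u j)) = ∏ j, φ j (u j) := fun u => by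
    simp only [φ, Finset.prod_ite_mem, Finset.univ_inter]
  simp_rw [hφ, box, setIntegral_univ_pi_prod]
  refine Finset.prod_le_prod (fun j _ => setIntegral_nonneg measurableSet_Icc fun x _ => ?_)
    fun j _ => ?_
  · simp only [φ]
    split_ifs
    exacts [mul_nonneg (ha j) (Real.exp_pos _).le, zero_le_one]
  · by_cases hj : j ∈ S
    · simp only [φ, hj, if_true]
      exact (integral_Icc_mul_exp_neg_le (ha j) (hδ j) _).trans (le_max_right _ _)
    · simp [φ, hj]

section IbpTermBounds

variable {G : (Fin n → ℝ) → X} {lam : Fin n → ℂ} {b : Fin n → ℝ} {C : ℝ}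

theorem norm_ibpTerm_le (hC : 0 ≤ C) (hb : ∀ j, b j < (lam j).re)
    (hG : ∀ v, 0 ≤ v → ‖G v‖ ≤ C * ∏ j, rexp (b j * v j)) (S : Finset (Fin n))
    {t : Fin n → ℝ} (ht : 0 ≤ t) :
    ‖ibpTerm lam G S t‖ ≤ (C * ∏ j, max 1 (‖lam j‖ / ((lam j).re - b j))) *
      ∏ j ∈ Sᶜ, rexp (-(((lam j).re - b j) * t j)) := by
  set c := S.piecewise t 1
  set K := C * ∏ j ∈ Sᶜ, rexp (b j * t j)
  set w : (Fin n → ℝ) → ℝ := fun u => ∏ j ∈ S, ‖lam j‖ * rexp (-(((lam j).re - b j) * u j))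
  have hpt : ∀ u ∈ box c,
      ‖(∏ j ∈ S, lam j * cexp (-(lam j * u j))) • G (S.piecewise u t)‖ ≤ K * w u := fun u hu => by
    have hu0 : 0 ≤ S.piecewise u t :=
      S.le_piecewise_of_le_of_le (fun j => (mem_box.1 hu j).1) ht
    rw [norm_smul, norm_prod]
    simp only [norm_mul, norm_cexp_neg_mul_ofReal]
    calc (∏ j ∈ S, ‖lam j‖ * rexp (-((lam j).re * u j))) * ‖G (S.piecewise u t)‖
        ≤ (∏ j ∈ S, ‖lam j‖ * rexp (-((lam j).re * u j))) *
            (C * ∏ j, rexp (b j * S.piecewise u t j)) := by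
          gcongr; exact hG _ hu0
      _ = K * w u := by
          simp only [prod_piecewise_apply S (fun j x => rexp (b j * x)), K, w, exp_neg_sub_mul,
            ← mul_assoc, Finset.prod_mul_distrib]
          ring
  have hw : IntegrableOn (fun u => K * w u) (box c) :=
    (by fun_prop : Continuous fun u => K * w u).continuousOn.integrableOn_compact
      (box_eq_Icc c ▸ isCompact_Icc)
  calc ‖ibpTerm lam G S t‖
      = (∏ j ∈ Sᶜ, rexp (-((lam j).re * t j))) *
          ‖∫ u in box c, (∏ j ∈ S, lam j * cexp (-(lam j * u j))) • G (S.piecewise u t)‖ := by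
        simp only [ibpTerm, norm_smul, norm_prod, norm_cexp_neg_mul_ofReal, c]
    _ ≤ (∏ j ∈ Sᶜ, rexp (-((lam j).re * t j))) *
          (K * ∏ j, max 1 (‖lam j‖ / ((lam j).re - b j))) := by
        gcongr
        refine (norm_integral_le_of_norm_le hw
          (ae_restrict_of_forall_mem (measurableSet_box c) hpt)).trans ?_
        rw [integral_const_mul]
        exact mul_le_mul_of_nonneg_left (integral_box_piecewise_prod_exp_le
          (fun _ => norm_nonneg _) (fun j => sub_pos.2 (hb j)) t) (by positivity)
    _ = _ := by
        simp only [K, exp_neg_sub_mul, Finset.prod_mul_distrib]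
        ring

theorem norm_ibpTerm_le_const (hC : 0 ≤ C) (hb : ∀ j, b j < (lam j).re)
    (hG : ∀ v, 0 ≤ v → ‖G v‖ ≤ C * ∏ j, rexp (b j * v j)) (S : Finset (Fin n))
    {t : Fin n → ℝ} (ht : 0 ≤ t) :
    ‖ibpTerm lam G S t‖ ≤ C * ∏ j, max 1 (‖lam j‖ / ((lam j).re - b j)) := by
  refine (norm_ibpTerm_le hC hb hG S ht).trans (mul_le_of_le_one_right (by positivity) ?_)
  exact Finset.prod_le_one (fun _ _ => (Real.exp_pos _).le) fun j _ =>
    Real.exp_le_one_iff.2 (neg_nonpos.2 (mul_nonneg (sub_pos.2 (hb j)).le (ht j)))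

theorem tendsto_ibpTerm_zero (hC : 0 ≤ C) (hb : ∀ j, b j < (lam j).re)
    (hG : ∀ v, 0 ≤ v → ‖G v‖ ≤ C * ∏ j, rexp (b j * v j)) {S : Finset (Fin n)}
    (hS : S ≠ Finset.univ) : Tendsto (ibpTerm lam G S) atTop (𝓝 0) := by
  obtain ⟨j₀, hj₀⟩ : ∃ j, j ∈ Sᶜ := by simpa [Finset.eq_univ_iff_forall] using hS
  set D := C * ∏ j, max 1 (‖lam j‖ / ((lam j).re - b j))
  have hdecay : Tendsto (fun t : Fin n → ℝ => D * rexp (-(((lam j₀).re - b j₀) * t j₀)))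
      atTop (𝓝 0) := by
    have heval : Tendsto (fun t : Fin n → ℝ => t j₀) atTop atTop :=
      tendsto_atTop_atTop_of_monotone (Function.monotone_eval j₀) fun x => ⟨fun _ => x, le_rfl⟩
    simpa using ((Real.tendsto_exp_atBot.comp
      (tendsto_neg_atTop_atBot.comp (heval.const_mul_atTop (sub_pos.2 (hb j₀))))).const_mul D)
  refine squeeze_zero_norm' ?_ hdecay
  filter_upwards [eventually_ge_atTop 0] with t ht
  refine (norm_ibpTerm_le hC hb hG S ht).trans (mul_le_mul_of_nonneg_left ?_ (by positivity))
  rw [← Finset.mul_prod_erase _ _ hj₀]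
  exact mul_le_of_le_one_right (Real.exp_pos _).le <|
    Finset.prod_le_one (fun _ _ => (Real.exp_pos _).le) fun j _ =>
      Real.exp_le_one_iff.2 (neg_nonpos.2 (mul_nonneg (sub_pos.2 (hb j)).le (ht j)))

end IbpTermBounds

section Antiderivative

variable [CompleteSpace X] {f : (Fin n → ℝ) → X} {lam : Fin n → ℂ} {b : Fin n → ℝ} {C : ℝ}

theorem omegaBdd_of_norm_le_exp (hf : LocInt f) (hC : 0 ≤ C) (hb : ∀ j, b j < (lam j).re)
    (hG : ∀ v, 0 ≤ v → ‖∫ s in box v, f s‖ ≤ C * ∏ j, rexp (b j * v j)) :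
    OmegaBdd f lam := by
  refine ⟨2 ^ n * (C * ∏ j, max 1 (‖lam j‖ / ((lam j).re - b j))), fun t => ?_⟩
  by_cases ht : 0 ≤ t
  · rw [truncInt_eq_sum_ibpTerm hf]
    refine (norm_sum_le _ _).trans <|
      (Finset.sum_le_sum fun S _ => norm_ibpTerm_le_const hC hb hG S ht).trans_eq ?_
    simp
  · simp only [truncInt, box_eq_Icc, Icc_eq_empty ht, Measure.restrict_empty,
      integral_zero_measure, norm_zero]
    positivity

theorem tendsto_truncInt_of_norm_le_exp (hf : LocInt f) (hC : 0 ≤ C)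
    (hb : ∀ j, b j < (lam j).re)
    (hG : ∀ v, 0 ≤ v → ‖∫ s in box v, f s‖ ≤ C * ∏ j, rexp (b j * v j)) :
    Tendsto (truncInt f lam) atTop
      (𝓝 ((∏ j, lam j) • lapTr (fun t => ∫ s in box t, f s) lam)) := by
  have habs := omegaAbs_of_norm_le_exp (continuous_setIntegral_box hf) hb hG
  have hterms : ∀ S, Tendsto (ibpTerm lam (fun v => ∫ s in box v, f s) S) atTop
      (𝓝 (if S = Finset.univ then (∏ j, lam j) • lapTr (fun t => ∫ s in box t, f s) lam
        else 0)) := fun S => by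
    split_ifs with hS
    · subst hS
      exact ((tendsto_truncInt_lapTr habs).const_smul _).congr fun t =>
        (ibpTerm_univ lam _ t).symm
    · exact tendsto_ibpTerm_zero hC hb hG hS
  have hsum := tendsto_finsetSum Finset.univ fun S _ => hterms S
  rw [Finset.sum_ite_eq', if_pos (Finset.mem_univ _)] at hsum
  exact hsum.congr fun t => (truncInt_eq_sum_ibpTerm hf lam t).symm

end Antiderivative

theorem laplace_of_antiderivative_general [CompleteSpace X]
    (n : ℕ) (f : (Fin n → ℝ) → X) (hf : LocInt f)
    (lam0 lam : Fin n → ℂ) (M : ℝ) (hM : 0 < M)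
    (hG : ∀ t : Fin n → ℝ, (∀ j, 0 ≤ t j) →
      ‖∫ s in box t, f s‖ ≤ M * ∑ S : Finset (Fin n),
        (∏ j ∈ S, Real.exp ((lam0 j).re * t j)) *
          ∏ j ∈ Sᶜ, ∫ s in (0:ℝ)..(t j), Real.exp ((lam0 j).re * s))
    (hlam : ∀ j, max ((lam0 j).re) 0 < (lam j).re) :
    OmegaAbs (fun t => ∫ s in box t, f s) lam ∧
    OmegaBdd f lam ∧
    LapConvTo f lam ((∏ j, lam j) • lapTr (fun t => ∫ s in box t, f s) lam) := by
  set b : Fin n → ℝ := fun j => (max (lam0 j).re 0 + (lam j).re) / 2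
  have hb0 : ∀ j, max (lam0 j).re 0 < b j := fun j => by simp only [b]; linarith [hlam j]
  have hbl : ∀ j, b j < (lam j).re := fun j => by simp only [b]; linarith [hlam j]
  have hb : ∀ j, 0 < b j := fun j => (le_max_right _ _).trans_lt (hb0 j)
  have hC : 0 ≤ M * ∏ j, (1 + 1 / b j) :=
    mul_nonneg hM.le (Finset.prod_nonneg fun j _ => by have := hb j; positivity)
  have hGb := fun t (ht : 0 ≤ t) => norm_setIntegral_box_le_exp hM.le hG
    (fun j => (le_max_left _ _).trans (hb0 j).le) hb ht
  exact ⟨omegaAbs_of_norm_le_exp (continuous_setIntegral_box hf) hbl hGb,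
    omegaBdd_of_norm_le_exp hf hC hbl hGb,
    lapConvTo_of_tendsto (tendsto_truncInt_of_norm_le_exp hf hC hbl hGb)⟩

/-- If the antiderivative `G` of `f` satisfies the `2ⁿ`-term bound associated with `λ⁰` and
`Re λⱼ > max(Re λⱼ⁰, 0)` for all `j`, then `λ ∈ Ω_abs(G)`, `λ ∈ Ω(f) ∩ Ω_b(f)` and
`(Lf)(λ) = λ₁·…·λₙ·(LG)(λ)`. -/
theorem laplace_of_antiderivative [CompleteSpace X]
    (n : ℕ) (hn : 1 ≤ n) (f : (Fin n → ℝ) → X) (hf : LocInt f)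
    (lam0 lam : Fin n → ℂ) (M : ℝ) (hM : 0 < M)
    (hG : ∀ t : Fin n → ℝ, (∀ j, 0 ≤ t j) →
      ‖∫ s in box t, f s‖ ≤ M * ∑ S : Finset (Fin n),
        (∏ j ∈ S, Real.exp ((lam0 j).re * t j)) *
          ∏ j ∈ Sᶜ, ∫ s in (0:ℝ)..(t j), Real.exp ((lam0 j).re * s))
    (hlam : ∀ j, max ((lam0 j).re) 0 < (lam j).re) :
    OmegaAbs (fun t => ∫ s in box t, f s) lam ∧
    OmegaBdd f lam ∧
    LapConvTo f lam ((∏ j, lam j) • lapTr (fun t => ∫ s in box t, f s) lam) :=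
  laplace_of_antiderivative_general n f hf lam0 lam M hM hG hlam
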